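/- arXiv:2401.00276 — 4 statements merged into one kernel-verified Lean document; each statement's English description precedes it below -/
import Mathlib

section
/- Let (Ω, 𝒜, P) be a probability space, K ≥ 2 a natural number, Θ : Ω → ℝ^K a random vector with 0 ≤ Θ_k ≤ 1 almost surely for each k, and Y : Ω → ℝ^K a random vector such that for every k ∈ {1,…,K}, Y_k ∈ {0,1} almost surely, Y_k is square-integrable, and E[Y_k | σ(Θ)] = Θ_k almost surely. Then for any weights w_1, …, w_K ≥ 0, ∑_{k=1}^K w_k Var(Y_k) = ∑_{k=1}^K w_k E[Θ_k·(1−Θ_k)] + ∑_{k=1}^K w_k Var(Θ_k). -/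
open MeasureTheory ProbabilityTheory

/-- Additive decomposition of the weighted variance-based total uncertainty:
`∑ k, w k * Var(Y k) = ∑ k, w k * E[Θ k (1 - Θ k)] + ∑ k, w k * Var(Θ k)`,
assuming `E[Y k | σ(Θ)] = Θ k` a.s., `0 ≤ Θ k ≤ 1` a.s. and `Y k ∈ {0,1}` a.s. -/
theorem stmt_1
    {Ω : Type*} [MeasurableSpace Ω] {P : Measure Ω} [IsProbabilityMeasure P]
    {K : ℕ} (hK : 2 ≤ K)
    (Θ Y : Ω → Fin K → ℝ)
    (hΘmeas : Measurable Θ)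
    (hΘ01 : ∀ k, ∀ᵐ ω ∂P, 0 ≤ Θ ω k ∧ Θ ω k ≤ 1)
    (hY01 : ∀ k, ∀ᵐ ω ∂P, Y ω k = 0 ∨ Y ω k = 1)
    (hYL2 : ∀ k, MemLp (fun ω => Y ω k) 2 P)
    (hcond : ∀ k,
      P[(fun ω => Y ω k) | MeasurableSpace.comap Θ inferInstance] =ᵐ[P] fun ω => Θ ω k)
    (w : Fin K → ℝ) (hw : ∀ k, 0 ≤ w k) :
    ∑ k, w k * variance (fun ω => Y ω k) P
      = (∑ k, w k * ∫ ω, Θ ω k * (1 - Θ ω k) ∂P)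
        + ∑ k, w k * variance (fun ω => Θ ω k) P := by
  rw [← Finset.sum_add_distrib]
  refine Finset.sum_congr rfl fun k _ => ?_
  rw [← mul_add]
  congr 1
  set f : Ω → ℝ := fun ω => Y ω k with hf
  set g : Ω → ℝ := fun ω => Θ ω k with hg
  have hgm : Measurable g := (measurable_pi_apply k).comp hΘmeas
  have hgL2 : MemLp g 2 P := by
    refine MemLp.of_bound hgm.aestronglyMeasurable 1 ?_
    filter_upwards [hΘ01 k] with ω ⟨h0, h1⟩
    rw [Real.norm_eq_abs, abs_le]
    constructor <;> linarith
  have hgi : Integrable g P := hgL2.integrable one_le_two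
  have hg2i : Integrable (fun ω => g ω ^ 2) P := hgL2.integrable_sq
  have hfi : Integrable f P := (hYL2 k).integrable one_le_two
  -- E[f] = E[g]
  have hEfg : ∫ ω, f ω ∂P = ∫ ω, g ω ∂P := by
    have hm : MeasurableSpace.comap Θ inferInstance ≤ (inferInstance : MeasurableSpace Ω) :=
      hΘmeas.comap_le
    haveI : SigmaFinite (P.trim hm) := by
      have : IsFiniteMeasure (P.trim hm) := isFiniteMeasure_trim hm
      infer_instance
    rw [← integral_condExp hm (f := f)]
    exact integral_congr_ae (hcond k)
  -- f² = f a.e.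
  have hsq : (fun ω => f ω ^ 2) =ᵐ[P] f := by
    filter_upwards [hY01 k] with ω h
    rcases h with h | h <;> simp [hf, h]
  have hVf : variance f P = (∫ ω, g ω ∂P) - (∫ ω, g ω ∂P) ^ 2 := by
    rw [variance_eq_sub (hYL2 k), hEfg]
    congr 1
    rw [show (fun ω => f ω) ^ 2 = fun ω => f ω ^ 2 from rfl]
    rw [integral_congr_ae hsq, hEfg]
  have hVg : variance g P = (∫ ω, g ω ^ 2 ∂P) - (∫ ω, g ω ∂P) ^ 2 :=
    variance_eq_sub hgL2
  have hI : ∫ ω, g ω * (1 - g ω) ∂P = (∫ ω, g ω ∂P) - ∫ ω, g ω ^ 2 ∂P := by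
    have : (fun ω => g ω * (1 - g ω)) = fun ω => g ω - g ω ^ 2 := by
      funext ω; ring
    rw [this, integral_sub hgi hg2i]
  calc variance f P = (∫ ω, g ω ∂P) - (∫ ω, g ω ∂P) ^ 2 := hVf
    _ = ((∫ ω, g ω ∂P) - ∫ ω, g ω ^ 2 ∂P)
        + ((∫ ω, g ω ^ 2 ∂P) - (∫ ω, g ω ∂P) ^ 2) := by ring
    _ = (∫ ω, g ω * (1 - g ω) ∂P) + variance g P := by rw [hI, hVg]
end

section
/- Let (Ω, 𝒜, P) be a probability space, K ≥ 2, and Θ : Ω → ℝ^K a random vector with square-integrable coordinates such that Θ_k ≥ 0 for all k and ∑_{k=1}^K Θ_k = 1 almost surely. Let w_1, …, w_K > 0, let β ∈ ℝ^K be given by β_k = (1/2)·(1 − ((K−2)/w_k)/(∑_{j=1}^K 1/w_j)), and suppose E[Θ] ≠ β. Let z ∈ ℝ^K be a constant vector such that E[Θ] + z = λ·E[Θ] + (1−λ)·β for some λ ∈ (0,1), and set Θ' = Θ + z. Then ∑_{k=1}^K w_k E[Θ'_k(1−Θ'_k)] > ∑_{k=1}^K w_k E[Θ_k(1−Θ_k)],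 and ∑_{k=1}^K w_k (E[Θ'_k(1−Θ'_k)] + Var(Θ'_k)) > ∑_{k=1}^K w_k (E[Θ_k(1−Θ_k)] + Var(Θ_k)). -/
open MeasureTheory ProbabilityTheory Finset

/-- Corollary 1: a spread-preserving location shift `Θ' = Θ + z` that moves the mean of
`Θ` toward the maximizer `β` (i.e. `E[Θ] + z = lam • E[Θ] + (1 - lam) • β` with
`lam ∈ (0,1)` and `E[Θ] ≠ β`) strictly increases the variance-based aleatoric and total
uncertainties. -/
theorem stmt_8
    {Ω : Type*} [MeasurableSpace Ω] {P : Measure Ω} [IsProbabilityMeasure P]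
    {K : ℕ} (hK : 2 ≤ K)
    (Θ : Ω → Fin K → ℝ)
    (hΘL2 : ∀ k, MemLp (fun ω => Θ ω k) 2 P)
    (hsimplex : ∀ᵐ ω ∂P, (∀ k, 0 ≤ Θ ω k) ∧ ∑ k, Θ ω k = 1)
    (w : Fin K → ℝ) (hw : ∀ k, 0 < w k)
    (β : Fin K → ℝ)
    (hβ : ∀ k, β k = (1 / 2) * (1 - ((K : ℝ) - 2) / w k / ∑ j, 1 / w j))
    (hne : (fun k => ∫ ω, Θ ω k ∂P) ≠ β)
    (z : Fin K → ℝ) (lam : ℝ) (hlam : 0 < lam) (hlam' : lam < 1)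
    (hz : ∀ k, (∫ ω, Θ ω k ∂P) + z k = lam * (∫ ω, Θ ω k ∂P) + (1 - lam) * β k) :
    ((∑ k, w k * ∫ ω, Θ ω k * (1 - Θ ω k) ∂P)
        < ∑ k, w k * ∫ ω, (Θ ω k + z k) * (1 - (Θ ω k + z k)) ∂P)
      ∧ ((∑ k, w k * ((∫ ω, Θ ω k * (1 - Θ ω k) ∂P) + variance (fun ω => Θ ω k) P))
          < ∑ k, w k * ((∫ ω, (Θ ω k + z k) * (1 - (Θ ω k + z k)) ∂P)
              + variance (fun ω => Θ ω k + z k) P)) := by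
  classical
  set m : Fin K → ℝ := fun k => ∫ ω, Θ ω k ∂P with hm
  set S : ℝ := ∑ j, 1 / w j with hSdef
  have hKpos : 0 < K := lt_of_lt_of_le (by norm_num) hK
  have : Nonempty (Fin K) := ⟨⟨0, hKpos⟩⟩
  have hne' : (Finset.univ : Finset (Fin K)).Nonempty := Finset.univ_nonempty
  have hS : 0 < S := Finset.sum_pos (fun j _ => one_div_pos.mpr (hw j)) hne'
  -- integrability facts
  have hInt : ∀ k, Integrable (fun ω => Θ ω k) P :=
    fun k => (hΘL2 k).integrable (by norm_num)
  have hIntSq : ∀ k, Integrable (fun ω => Θ ω k ^ 2) P :=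
    fun k => (hΘL2 k).integrable_sq
  have hIntQ : ∀ k, Integrable (fun ω => Θ ω k * (1 - Θ ω k)) P := by
    intro k
    have : (fun ω => Θ ω k * (1 - Θ ω k)) = fun ω => Θ ω k - Θ ω k ^ 2 := by
      funext ω; ring
    rw [this]; exact (hInt k).sub (hIntSq k)
  -- sum of means is 1
  have hmsum : ∑ k, m k = 1 := by
    have h1 : ∑ k, m k = ∫ ω, ∑ k, Θ ω k ∂P :=
      (integral_finset_sum Finset.univ (fun k _ => hInt k)).symm
    have h2 : ∫ ω, ∑ k, Θ ω k ∂P = ∫ (_ : Ω), (1 : ℝ) ∂P :=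
      integral_congr_ae (hsimplex.mono fun ω h => h.2)
    rw [h1, h2]; simp
  -- sum of β is 1
  have hβsum : ∑ k, β k = 1 := by
    have : ∀ k, β k = 1 / 2 - ((K : ℝ) - 2) / (2 * S) * (1 / w k) := by
      intro k
      rw [hβ k]
      field_simp
    rw [Finset.sum_congr rfl (fun k _ => this k), Finset.sum_sub_distrib, ← Finset.mul_sum,
      ← hSdef, Finset.sum_const, Finset.card_univ, Fintype.card_fin]
    field_simp
    ring
  -- gradient of V is constant at β
  have hc : ∀ k, w k * (1 - 2 * β k) = ((K : ℝ) - 2) / S := by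
    intro k
    rw [hβ k]
    have hwk := (hw k).ne'
    field_simp
    ring
  -- z in terms of d := β - m
  have hzk : ∀ k, z k = (1 - lam) * (β k - m k) := by
    intro k; have h := hz k; linarith
  -- the key positive quantity
  set D : ℝ := ∑ k, w k * (β k - m k) ^ 2 with hD
  have hDpos : 0 < D := by
    have hne2 : ∃ k, m k ≠ β k := by
      by_contra h
      push_neg at h
      exact hne (funext fun k => h k)
    obtain ⟨k0, hk0⟩ := hne2
    refine Finset.sum_pos' (fun k _ => mul_nonneg (hw k).le (sq_nonneg _))
      ⟨k0, Finset.mem_univ k0, ?_⟩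
    have h0 : β k0 - m k0 ≠ 0 := sub_ne_zero_of_ne (Ne.symm hk0)
    exact mul_pos (hw k0) (lt_of_le_of_ne (sq_nonneg _) (Ne.symm (pow_ne_zero 2 h0)))
  -- algebraic identity for the weighted shift terms
  have hdelta : ∑ k, w k * (z k * (1 - 2 * m k) - z k ^ 2) = (1 - lam ^ 2) * D := by
    have hterm : ∀ k, w k * (z k * (1 - 2 * m k) - z k ^ 2)
        = (1 - lam) * (((K : ℝ) - 2) / S) * (β k - m k)
          + (1 - lam ^ 2) * (w k * (β k - m k) ^ 2) := by
      intro k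
      rw [hzk k, ← hc k]
      ring
    rw [Finset.sum_congr rfl (fun k _ => hterm k), Finset.sum_add_distrib, ← Finset.mul_sum,
      ← Finset.mul_sum, Finset.sum_sub_distrib, hβsum, hmsum, hD]
    ring
  have hDelta : 0 < (1 - lam ^ 2) * D := by
    have : lam ^ 2 < 1 := by nlinarith
    nlinarith
  -- integral of shifted quadratic
  have hIntShift : ∀ k, ∫ ω, (Θ ω k + z k) * (1 - (Θ ω k + z k)) ∂P
      = (∫ ω, Θ ω k * (1 - Θ ω k) ∂P) + (z k * (1 - 2 * m k) - z k ^ 2) := by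
    intro k
    have hfun : (fun ω => (Θ ω k + z k) * (1 - (Θ ω k + z k)))
        = fun ω => Θ ω k * (1 - Θ ω k) + ((z k - z k ^ 2) + (-2 * z k) * Θ ω k) := by
      funext ω; ring
    have hg2 : Integrable (fun ω => -2 * z k * Θ ω k) P := (hInt k).const_mul _
    have hg : Integrable (fun ω => z k - z k ^ 2 + -2 * z k * Θ ω k) P :=
      (integrable_const _).add hg2
    rw [hfun, integral_add (hIntQ k) hg, integral_add (integrable_const _) hg2,
      integral_const_mul, integral_const]
    simp only [measure_univ, ENNReal.toReal_one, smul_eq_mul, one_mul, probReal_univ, ← hm]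
    ring
  -- variance is shift-invariant
  have hVarShift : ∀ k, variance (fun ω => Θ ω k + z k) P = variance (fun ω => Θ ω k) P := by
    intro k
    unfold ProbabilityTheory.variance ProbabilityTheory.evariance
    congr 1
    refine lintegral_congr fun ω => ?_
    congr 2
    rw [integral_add (hInt k) (integrable_const (z k)), integral_const]
    simp only [measure_univ, ENNReal.toReal_one, smul_eq_mul, one_mul, probReal_univ]
    ring
  -- conclude
  have hsum1 : ∑ k, w k * ∫ ω, (Θ ω k + z k) * (1 - (Θ ω k + z k)) ∂P
      = (∑ k, w k * ∫ ω, Θ ω k * (1 - Θ ω k) ∂P) + (1 - lam ^ 2) * D := by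
    rw [← hdelta, ← Finset.sum_add_distrib]
    refine Finset.sum_congr rfl fun k _ => ?_
    rw [hIntShift k]; ring
  constructor
  · rw [hsum1]; linarith
  · have hsum2 : ∑ k, w k * ((∫ ω, (Θ ω k + z k) * (1 - (Θ ω k + z k)) ∂P)
        + variance (fun ω => Θ ω k + z k) P)
        = (∑ k, w k * ((∫ ω, Θ ω k * (1 - Θ ω k) ∂P) + variance (fun ω => Θ ω k) P))
          + (1 - lam ^ 2) * D := by
      rw [← hdelta, ← Finset.sum_add_distrib]
      refine Finset.sum_congr rfl fun k _ => ?_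
      rw [hIntShift k, hVarShift k]; ring
    rw [hsum2]; linarith
end

section
/- Let (Ω, 𝒜, P) be a probability space, K ≥ 2, and Θ : Ω → ℝ^K a random vector with square-integrable coordinates such that Θ_k ≥ 0 for all k and ∑_{k=1}^K Θ_k = 1 almost surely, and suppose E[Θ] ≠ (1/K, …, 1/K). Let w > 0 and set w_1 = … = w_K = w. Let z ∈ ℝ^K be a constant vector such that E[Θ] + z = λ·E[Θ] + (1−λ)·(1/K, …, 1/K) for some λ ∈ (0,1), and set Θ' = Θ + z. Then w·∑_{k=1}^K E[Θ'_k(1−Θ'_k)] > w·∑_{k=1}^K E[Θ_k(1−Θ_k)], and w·∑_{k=1}^K (E[Θ'_k(1−Θ'_k)] + Var(Θ'_k)) > w·∑_{k=1}^K (E[Θ_k(1−Θ_k)] + Var(Θ_k)). -/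
open MeasureTheory ProbabilityTheory Finset

lemma var_shift {Ω : Type*} [MeasurableSpace Ω] {P : Measure Ω} [IsProbabilityMeasure P]
    (X : Ω → ℝ) (hX : Integrable X P) (c : ℝ) :
    variance (fun ω => X ω + c) P = variance X P := by
  have hmean : ∫ ω, (X ω + c) ∂P = (∫ ω, X ω ∂P) + c := by
    rw [integral_add hX (integrable_const c), integral_const]; simp
  unfold variance evariance
  rw [hmean]
  congr 1
  exact lintegral_congr fun ω => by norm_num [add_sub_add_right_eq_sub]

/-- Strict Axiom A4 (equal weights): a spread-preserving center-shift `Θ' = Θ + z`, whose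
mean is `lam • E[Θ] + (1 - lam) • (1/K, …, 1/K)` with `lam ∈ (0,1)` and
`E[Θ] ≠ (1/K, …, 1/K)`, strictly increases variance-based aleatoric and total
uncertainty. -/
theorem stmt_9
    {Ω : Type*} [MeasurableSpace Ω] {P : Measure Ω} [IsProbabilityMeasure P]
    {K : ℕ} (hK : 2 ≤ K)
    (Θ : Ω → Fin K → ℝ)
    (hΘL2 : ∀ k, MemLp (fun ω => Θ ω k) 2 P)
    (hsimplex : ∀ᵐ ω ∂P, (∀ k, 0 ≤ Θ ω k) ∧ ∑ k, Θ ω k = 1)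
    (hne : (fun k => ∫ ω, Θ ω k ∂P) ≠ fun _ => 1 / (K : ℝ))
    (w : ℝ) (hw : 0 < w)
    (z : Fin K → ℝ) (lam : ℝ) (hlam : 0 < lam) (hlam' : lam < 1)
    (hz : ∀ k, (∫ ω, Θ ω k ∂P) + z k
        = lam * (∫ ω, Θ ω k ∂P) + (1 - lam) * (1 / (K : ℝ))) :
    (w * (∑ k, ∫ ω, Θ ω k * (1 - Θ ω k) ∂P)
        < w * ∑ k, ∫ ω, (Θ ω k + z k) * (1 - (Θ ω k + z k)) ∂P)
      ∧ (w * (∑ k, ((∫ ω, Θ ω k * (1 - Θ ω k) ∂P) + variance (fun ω => Θ ω k) P))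
          < w * ∑ k, ((∫ ω, (Θ ω k + z k) * (1 - (Θ ω k + z k)) ∂P)
              + variance (fun ω => Θ ω k + z k) P)) := by
  set μ : Fin K → ℝ := fun k => ∫ ω, Θ ω k ∂P with hμ
  have hKpos : (0:ℝ) < K := by exact_mod_cast (by omega : 0 < K)
  have h1 : ∀ k, Integrable (fun ω => Θ ω k) P := fun k => (hΘL2 k).integrable one_le_two
  have h2 : ∀ k, Integrable (fun ω => Θ ω k * Θ ω k) P := by
    intro k
    have := (hΘL2 k).integrable_sq
    simpa [sq] using this
  have hf : ∀ k, Integrable (fun ω => Θ ω k * (1 - Θ ω k)) P := by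
    intro k
    have : (fun ω => Θ ω k * (1 - Θ ω k)) = fun ω => Θ ω k - Θ ω k * Θ ω k := by
      funext ω; ring
    rw [this]; exact (h1 k).sub (h2 k)
  -- sum of means is 1
  have hsum : ∑ k, μ k = 1 := by
    have e1 : ∑ k, μ k = ∫ ω, (∑ k, Θ ω k) ∂P :=
      (integral_finset_sum univ fun k _ => h1 k).symm
    have e2 : ∫ ω, (∑ k, Θ ω k) ∂P = ∫ (_ : Ω), (1:ℝ) ∂P := by
      refine integral_congr_ae ?_
      filter_upwards [hsimplex] with ω hω using hω.2
    rw [e1, e2, integral_const]; simp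
  -- z in terms of d
  have hzk : ∀ k, z k = (1 - lam) * (1 / (K:ℝ) - μ k) := by
    intro k; linear_combination hz k
  -- per-coordinate integral identity
  have key : ∀ k, ∫ ω, (Θ ω k + z k) * (1 - (Θ ω k + z k)) ∂P
      = (∫ ω, Θ ω k * (1 - Θ ω k) ∂P) + (z k - 2 * z k * μ k - z k ^ 2) := by
    intro k
    have hg : Integrable (fun ω => z k - 2 * z k * Θ ω k - z k ^ 2) P :=
      ((integrable_const (z k)).sub ((h1 k).const_mul (2 * z k))).sub (integrable_const (z k ^ 2))
    have hfun : (fun ω => (Θ ω k + z k) * (1 - (Θ ω k + z k)))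
        = fun ω => Θ ω k * (1 - Θ ω k) + (z k - 2 * z k * Θ ω k - z k ^ 2) := by
      funext ω; ring
    have hg2 : ∫ ω, (z k - 2 * z k * Θ ω k - z k ^ 2) ∂P = z k - 2 * z k * μ k - z k ^ 2 := by
      have e : (fun ω => z k - 2 * z k * Θ ω k - z k ^ 2)
          = fun ω => (z k - z k ^ 2) + (-(2 * z k)) * Θ ω k := by funext ω; ring
      rw [e, integral_add (integrable_const _) ((h1 k).const_mul _), integral_const,
        integral_const_mul]
      simp only [measure_univ, probReal_univ, ENNReal.toReal_one, one_smul, hμ]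
      ring
    rw [hfun, integral_add (hf k) hg, hg2]
  -- the extra amount
  set d : Fin K → ℝ := fun k => 1 / (K:ℝ) - μ k with hd
  have hd0 : ∑ k, d k = 0 := by
    simp only [hd, Finset.sum_sub_distrib, hsum, Finset.sum_const, Finset.card_univ,
      Fintype.card_fin, nsmul_eq_mul]
    field_simp
    simp
  set S : ℝ := ∑ k, (d k) ^ 2 with hS
  have hSpos : 0 < S := by
    have hex : ∃ k, μ k ≠ 1 / (K:ℝ) := by
      by_contra h
      push_neg at h
      exact hne (funext h)
    obtain ⟨k0, hk0⟩ := hex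
    refine Finset.sum_pos' (fun k _ => sq_nonneg _) ⟨k0, Finset.mem_univ _, ?_⟩
    exact pow_two_pos_of_ne_zero (sub_ne_zero_of_ne (by simpa [hd] using (Ne.symm hk0)))
  set c : ℝ := 1 - lam with hc
  have hE : ∑ k, (z k - 2 * z k * μ k - z k ^ 2) = (2 * c - c ^ 2) * S := by
    have : ∀ k, z k - 2 * z k * μ k - z k ^ 2
        = (c - 2 * c / K) * d k + (2 * c - c ^ 2) * (d k) ^ 2 := by
      intro k
      have hzc : z k = c * d k := by rw [hzk k, hc, hd]
      have hμk : μ k = 1 / (K:ℝ) - d k := by simp [hd]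
      rw [hzc, hμk]; field_simp; ring
    rw [Finset.sum_congr rfl fun k _ => this k, Finset.sum_add_distrib,
      ← Finset.mul_sum, ← Finset.mul_sum, hd0, mul_zero, zero_add, hS]
  have hEpos : 0 < (2 * c - c ^ 2) * S := by
    have hc0 : 0 < c := by simp [hc]; linarith
    have hc1 : c < 1 := by simp [hc]; linarith
    exact mul_pos (by nlinarith) hSpos
  -- rewrite new sums
  have hsum1 : ∑ k, ∫ ω, (Θ ω k + z k) * (1 - (Θ ω k + z k)) ∂P
      = (∑ k, ∫ ω, Θ ω k * (1 - Θ ω k) ∂P) + (2 * c - c ^ 2) * S := by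
    rw [Finset.sum_congr rfl fun k _ => key k, Finset.sum_add_distrib, hE]
  have hvar : ∀ k, variance (fun ω => Θ ω k + z k) P = variance (fun ω => Θ ω k) P :=
    fun k => var_shift _ (h1 k) (z k)
  constructor
  · rw [hsum1]; nlinarith [mul_pos hw hEpos]
  · have hsum2 : ∑ k, ((∫ ω, (Θ ω k + z k) * (1 - (Θ ω k + z k)) ∂P)
        + variance (fun ω => Θ ω k + z k) P)
        = (∑ k, ((∫ ω, Θ ω k * (1 - Θ ω k) ∂P) + variance (fun ω => Θ ω k) P))
          + (2 * c - c ^ 2) * S := by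
      rw [Finset.sum_congr rfl fun k _ => by rw [key k, hvar k]]
      rw [show ∀ f g h : Fin K → ℝ, ∑ k, (f k + h k + g k) = ∑ k, ((f k + g k) + h k) from
        fun f g h => Finset.sum_congr rfl fun k _ => by ring, Finset.sum_add_distrib, hE]
    rw [hsum2]; nlinarith [mul_pos hw hEpos]
end

section
/- Let (Ω, 𝒜, P) be a probability space, K ≥ 2, and let X, Z : Ω → ℝ^K be random vectors such that X and X' := X + Z both take values in the probability simplex Δ_K = {θ ∈ [0,1]^K : ∑_k θ_k = 1} almost surely and E[Z_k | σ(X)] = 0 almost surely for each k, where σ(X) is the σ-algebra generated by X. Let x̄ = E[X] and assume x̄_k > 0 for all k. Then E[∑_{k=1}^K X'_k · log(X'_k / x̄_k)] ≥ E[∑_{k=1}^K X_k · log(X_k / x̄_k)] (with the convention that θ_k · log(θ_k / x̄_k) equals 0 when θ_k = 0). -/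
open MeasureTheory ProbabilityTheory Finset

open Filter Topology

lemma aux_mul_log_ineq {a b : ℝ} (ha : 0 < a) (hb : 0 < b) :
    a * Real.log a + (Real.log a + 1) * (b - a) ≤ b * Real.log b := by
  have h := Real.log_le_sub_one_of_pos (div_pos ha hb)
  rw [Real.log_div ha.ne' hb.ne'] at h
  have h2 : b * (Real.log a - Real.log b) ≤ b * (a / b - 1) :=
    mul_le_mul_of_nonneg_left h hb.le
  have h3 : b * (a / b - 1) = a - b := by field_simp
  nlinarith

lemma aux_bound2 {s : ℝ} (h0 : 0 ≤ s) (h2 : s ≤ 2) : |s * Real.log s| ≤ 2 := by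
  rcases eq_or_lt_of_le h0 with h|h0
  · simp [← h]
  rcases le_total s 1 with h|h
  · have hl : Real.log s ≤ 0 := Real.log_nonpos h0.le h
    have h1 : -Real.log s ≤ 1/s - 1 := by
      have h' := Real.log_le_sub_one_of_pos (show (0:ℝ) < 1/s by positivity)
      rw [one_div, Real.log_inv] at h'
      rw [one_div]
      linarith
    rw [abs_of_nonpos (mul_nonpos_of_nonneg_of_nonpos h0.le hl)]
    have hm : s * (-Real.log s) ≤ s * (1/s - 1) := mul_le_mul_of_nonneg_left h1 h0.le
    have he : s * (1/s - 1) = 1 - s := by field_simp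
    nlinarith
  · have hl : 0 ≤ Real.log s := Real.log_nonneg h
    rw [abs_of_nonneg (mul_nonneg (by linarith) hl)]
    have hls : Real.log s ≤ Real.log 2 := Real.log_le_log h0 h2
    nlinarith [Real.log_two_lt_d9]

lemma aux_bound3 {s ε : ℝ} (hε : 0 < ε) (hε1 : ε ≤ 1) (hs : ε ≤ s) (h2 : s ≤ 2) :
    |Real.log s| ≤ -Real.log ε + 1 := by
  have hs0 : 0 < s := lt_of_lt_of_le hε hs
  have hεneg : Real.log ε ≤ 0 := Real.log_nonpos hε.le hε1
  rcases le_total s 1 with h|h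
  · have hl : Real.log s ≤ 0 := Real.log_nonpos hs0.le h
    have hle : Real.log ε ≤ Real.log s := Real.log_le_log hε hs
    rw [abs_of_nonpos hl]; linarith
  · have hl : 0 ≤ Real.log s := Real.log_nonneg h
    have hle : Real.log s ≤ Real.log 2 := Real.log_le_log hs0 h2
    rw [abs_of_nonneg hl]
    nlinarith [Real.log_two_lt_d9]

/-- Proposition 1 (corrigendum): the entropy-based epistemic uncertainty
`E[D_KL(X ‖ x̄)]` is weakly increasing under a mean-preserving spread `X' = X + Z`
(note `Real.log 0 = 0` in Mathlib, so `θ * log (θ / c)` realizes the convention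
`0 · log(0/c) = 0`). -/
theorem stmt_11
    {Ω : Type*} [MeasurableSpace Ω] {P : Measure Ω} [IsProbabilityMeasure P]
    {K : ℕ} (hK : 2 ≤ K)
    (X Z : Ω → Fin K → ℝ)
    (hXmeas : Measurable X) (hZmeas : Measurable Z)
    (hXsimplex : ∀ᵐ ω ∂P, (∀ k, 0 ≤ X ω k ∧ X ω k ≤ 1) ∧ ∑ k, X ω k = 1)
    (hX'simplex : ∀ᵐ ω ∂P,
      (∀ k, 0 ≤ X ω k + Z ω k ∧ X ω k + Z ω k ≤ 1) ∧ ∑ k, (X ω k + Z ω k) = 1)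
    (hcond : ∀ k, P[(fun ω => Z ω k) | MeasurableSpace.comap X inferInstance] =ᵐ[P] 0)
    (xbar : Fin K → ℝ) (hxbar : ∀ k, xbar k = ∫ ω, X ω k ∂P)
    (hxbarpos : ∀ k, 0 < xbar k) :
    (∫ ω, ∑ k, X ω k * Real.log (X ω k / xbar k) ∂P)
      ≤ ∫ ω, ∑ k, (X ω k + Z ω k) * Real.log ((X ω k + Z ω k) / xbar k) ∂P := by
  classical
  have hm : MeasurableSpace.comap X inferInstance ≤ ‹MeasurableSpace Ω› := hXmeas.comap_le
  have hXk : ∀ k, Measurable fun ω => X ω k := fun k => (measurable_pi_apply k).comp hXmeas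
  have hZk : ∀ k, Measurable fun ω => Z ω k := fun k => (measurable_pi_apply k).comp hZmeas
  have hXbd : ∀ᵐ ω ∂P, ∀ k, 0 ≤ X ω k ∧ X ω k ≤ 1 := hXsimplex.mono fun ω h => h.1
  have hX'bd : ∀ᵐ ω ∂P, ∀ k, 0 ≤ X ω k + Z ω k ∧ X ω k + Z ω k ≤ 1 :=
    hX'simplex.mono fun ω h => h.1
  have intbd : ∀ (f : Ω → ℝ) (C : ℝ), Measurable f → (∀ᵐ ω ∂P, |f ω| ≤ C) → Integrable f P :=
    fun f C hf hC => Integrable.mono' (integrable_const C) hf.aestronglyMeasurable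
      (hC.mono fun ω h => by simpa [Real.norm_eq_abs] using h)
  have hZbd : ∀ᵐ ω ∂P, ∀ k, |Z ω k| ≤ 2 := by
    filter_upwards [hXbd, hX'bd] with ω h1 h2 k
    rw [abs_le]
    constructor <;> linarith [(h1 k).1, (h1 k).2, (h2 k).1, (h2 k).2]
  have hZint : ∀ k, Integrable (fun ω => Z ω k) P := fun k =>
    intbd _ 2 (hZk k) (hZbd.mono fun ω h => h k)
  have hXint : ∀ k, Integrable (fun ω => X ω k) P := fun k =>
    intbd _ 1 (hXk k) (hXbd.mono fun ω h => abs_le.mpr ⟨by linarith [(h k).1], (h k).2⟩)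
  have hEZ : ∀ k, ∫ ω, Z ω k ∂P = 0 := by
    intro k
    rw [← integral_condExp (μ := P) (f := fun ω => Z ω k) hm, integral_congr_ae (hcond k)]
    simp
  -- smoothing sequence
  set ε : ℕ → ℝ := fun n => 1 / (n + 1) with hεdef
  have hεpos : ∀ n, 0 < ε n := fun n => by positivity
  have hεle1 : ∀ n, ε n ≤ 1 := fun n => by
    rw [hεdef]
    rw [div_le_one (by positivity)]
    exact le_add_of_nonneg_left (Nat.cast_nonneg n)
  set F : ℕ → Ω → ℝ := fun n ω => ∑ k, (X ω k + ε n) * Real.log (X ω k + ε n) with hF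
  set F' : ℕ → Ω → ℝ :=
    fun n ω => ∑ k, (X ω k + Z ω k + ε n) * Real.log (X ω k + Z ω k + ε n) with hF'
  have hFmeas : ∀ n, Measurable (F n) := fun n =>
    Finset.measurable_sum _ fun k _ =>
      ((hXk k).add_const (ε n)).mul (Real.measurable_log.comp ((hXk k).add_const (ε n)))
  have hF'meas : ∀ n, Measurable (F' n) := fun n =>
    Finset.measurable_sum _ fun k _ =>
      (((hXk k).add (hZk k)).add_const (ε n)).mul
        (Real.measurable_log.comp (((hXk k).add (hZk k)).add_const (ε n)))
  have hFbd : ∀ n, ∀ᵐ ω ∂P, |F n ω| ≤ 2 * K := by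
    intro n
    filter_upwards [hXbd] with ω h
    rw [hF]
    calc |∑ k, (X ω k + ε n) * Real.log (X ω k + ε n)|
        ≤ ∑ k, |(X ω k + ε n) * Real.log (X ω k + ε n)| := Finset.abs_sum_le_sum_abs _ _
      _ ≤ ∑ _k : Fin K, (2:ℝ) := Finset.sum_le_sum fun k _ =>
          aux_bound2 (by linarith [(h k).1, (hεpos n).le]) (by linarith [(h k).2, hεle1 n])
      _ = 2 * K := by simp [mul_comm]
  have hF'bd : ∀ n, ∀ᵐ ω ∂P, |F' n ω| ≤ 2 * K := by
    intro n
    filter_upwards [hX'bd] with ω h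
    rw [hF']
    calc |∑ k, (X ω k + Z ω k + ε n) * Real.log (X ω k + Z ω k + ε n)|
        ≤ ∑ k, |(X ω k + Z ω k + ε n) * Real.log (X ω k + Z ω k + ε n)| :=
          Finset.abs_sum_le_sum_abs _ _
      _ ≤ ∑ _k : Fin K, (2:ℝ) := Finset.sum_le_sum fun k _ =>
          aux_bound2 (by linarith [(h k).1, (hεpos n).le]) (by linarith [(h k).2, hεle1 n])
      _ = 2 * K := by simp [mul_comm]
  have hFint : ∀ n, Integrable (F n) P := fun n => intbd _ (2 * K) (hFmeas n) (hFbd n)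
  have hF'int : ∀ n, Integrable (F' n) P := fun n => intbd _ (2 * K) (hF'meas n) (hF'bd n)
  -- per-n inequality
  have hstep : ∀ n, ∫ ω, F n ω ∂P ≤ ∫ ω, F' n ω ∂P := by
    intro n
    set g : Fin K → Ω → ℝ := fun k ω => Real.log (X ω k + ε n) + 1 with hg
    have hgmeas : ∀ k, Measurable (g k) := fun k =>
      (Real.measurable_log.comp ((hXk k).add_const (ε n))).add_const 1
    have hXm : Measurable[MeasurableSpace.comap X inferInstance] X := fun s hs => ⟨s, hs, rfl⟩
    have hgm : ∀ k, Measurable[MeasurableSpace.comap X inferInstance] (g k) := fun k =>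
      (Real.measurable_log.comp (((measurable_pi_apply k).comp hXm).add_const (ε n))).add_const 1
    have hgbd : ∀ k, ∀ᵐ ω ∂P, |g k ω| ≤ -Real.log (ε n) + 2 := by
      intro k
      filter_upwards [hXbd] with ω h
      have h3 : |Real.log (X ω k + ε n)| ≤ -Real.log (ε n) + 1 :=
        aux_bound3 (hεpos n) (hεle1 n) (by linarith [(h k).1]) (by linarith [(h k).2, hεle1 n])
      calc |g k ω| ≤ |Real.log (X ω k + ε n)| + |(1:ℝ)| := abs_add_le _ _
        _ ≤ -Real.log (ε n) + 2 := by rw [abs_one]; linarith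
    have hgZint : ∀ k, Integrable (fun ω => g k ω * Z ω k) P := by
      intro k
      apply intbd _ ((-Real.log (ε n) + 2) * 2) ((hgmeas k).mul (hZk k))
      filter_upwards [hgbd k, hZbd] with ω h1 h2
      rw [Pi.mul_apply, abs_mul]
      have hln : Real.log (ε n) ≤ 0 := Real.log_nonpos (hεpos n).le (hεle1 n)
      exact mul_le_mul h1 (h2 k) (abs_nonneg _) (by linarith)
    have hgZ : ∀ k, ∫ ω, g k ω * Z ω k ∂P = 0 := by
      intro k
      have hmul := condExp_mul_of_stronglyMeasurable_left (m := MeasurableSpace.comap X inferInstance)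
        (μ := P) (hgm k).stronglyMeasurable
        (show Integrable (g k * fun ω => Z ω k) P from hgZint k) (hZint k)
      have h0 : (g k * P[(fun ω => Z ω k)|MeasurableSpace.comap X inferInstance]) =ᵐ[P] 0 :=
        (hcond k).mono fun ω h => by simp [Pi.mul_apply, h]
      have hmul' : P[(fun ω => g k ω * Z ω k)|MeasurableSpace.comap X inferInstance] =ᵐ[P]
          (0 : Ω → ℝ) := by
        refine EventuallyEq.trans ?_ h0
        exact hmul
      rw [← integral_condExp (μ := P) (f := fun ω => g k ω * Z ω k) hm,
        integral_congr_ae hmul']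
      simp
    have hpt : (fun ω => F n ω + ∑ k, g k ω * Z ω k) ≤ᵐ[P] F' n := by
      filter_upwards [hXbd, hX'bd] with ω h1 h2
      rw [hF, hF']
      simp only
      rw [← Finset.sum_add_distrib]
      apply Finset.sum_le_sum
      intro k _
      have ha : 0 < X ω k + ε n := by linarith [(h1 k).1, hεpos n]
      have hb : 0 < X ω k + Z ω k + ε n := by linarith [(h2 k).1, hεpos n]
      have H := aux_mul_log_ineq ha hb
      have hba : (X ω k + Z ω k + ε n) - (X ω k + ε n) = Z ω k := by ring
      rw [hba] at H
      simpa [hg] using H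
    have hint2 : Integrable (fun ω => ∑ k, g k ω * Z ω k) P :=
      integrable_finset_sum _ fun k _ => hgZint k
    have hmono : ∫ ω, (F n ω + ∑ k, g k ω * Z ω k) ∂P ≤ ∫ ω, F' n ω ∂P :=
      integral_mono_ae ((hFint n).add hint2) (hF'int n) hpt
    have hadd : ∫ ω, (F n ω + ∑ k, g k ω * Z ω k) ∂P
        = ∫ ω, F n ω ∂P + ∑ k, ∫ ω, g k ω * Z ω k ∂P := by
      rw [integral_add (hFint n) hint2, integral_finset_sum _ (fun k _ => hgZint k)]
    have hsum0 : ∑ k : Fin K, ∫ ω, g k ω * Z ω k ∂P = 0 := by simp [hgZ]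
    rw [hadd, hsum0, add_zero] at hmono
    exact hmono
  -- dominated convergence
  have hAmeas : Measurable (fun ω => ∑ k, X ω k * Real.log (X ω k)) :=
    Finset.measurable_sum _ fun k _ => (hXk k).mul (Real.measurable_log.comp (hXk k))
  have hA'meas : Measurable
      (fun ω => ∑ k, (X ω k + Z ω k) * Real.log (X ω k + Z ω k)) :=
    Finset.measurable_sum _ fun k _ =>
      ((hXk k).add (hZk k)).mul (Real.measurable_log.comp ((hXk k).add (hZk k)))
  have htendF : Tendsto (fun n => ∫ ω, F n ω ∂P) atTop
      (𝓝 (∫ ω, ∑ k, X ω k * Real.log (X ω k) ∂P)) := by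
    apply tendsto_integral_of_dominated_convergence (fun _ => (2 * K : ℝ))
      (fun n => (hFmeas n).aestronglyMeasurable) (integrable_const _)
    · intro n
      exact (hFbd n).mono fun ω h => by simpa [Real.norm_eq_abs] using h
    · filter_upwards [hXbd] with ω h
      rw [hF]
      apply tendsto_finset_sum
      intro k _
      have h1 : Tendsto (fun nn : ℕ => X ω k + ε nn) atTop (𝓝 (X ω k + 0)) :=
        tendsto_const_nhds.add tendsto_one_div_add_atTop_nhds_zero_nat
      rw [add_zero] at h1
      exact (Real.continuous_mul_log.tendsto (X ω k)).comp h1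
  have htendF' : Tendsto (fun n => ∫ ω, F' n ω ∂P) atTop
      (𝓝 (∫ ω, ∑ k, (X ω k + Z ω k) * Real.log (X ω k + Z ω k) ∂P)) := by
    apply tendsto_integral_of_dominated_convergence (fun _ => (2 * K : ℝ))
      (fun n => (hF'meas n).aestronglyMeasurable) (integrable_const _)
    · intro n
      exact (hF'bd n).mono fun ω h => by simpa [Real.norm_eq_abs] using h
    · filter_upwards [hX'bd] with ω h
      rw [hF']
      apply tendsto_finset_sum
      intro k _
      have h1 : Tendsto (fun nn : ℕ => X ω k + Z ω k + ε nn) atTop (𝓝 (X ω k + Z ω k + 0)) :=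
        tendsto_const_nhds.add tendsto_one_div_add_atTop_nhds_zero_nat
      rw [add_zero] at h1
      exact (Real.continuous_mul_log.tendsto (X ω k + Z ω k)).comp h1
  have hentropy : ∫ ω, ∑ k, X ω k * Real.log (X ω k) ∂P
      ≤ ∫ ω, ∑ k, (X ω k + Z ω k) * Real.log (X ω k + Z ω k) ∂P :=
    le_of_tendsto_of_tendsto' htendF htendF' hstep
  -- integrability of entropy terms and the linear parts
  have hAbd : ∀ᵐ ω ∂P, |∑ k, X ω k * Real.log (X ω k)| ≤ 2 * K := by
    filter_upwards [hXbd] with ω h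
    calc |∑ k, X ω k * Real.log (X ω k)| ≤ ∑ k, |X ω k * Real.log (X ω k)| :=
        Finset.abs_sum_le_sum_abs _ _
      _ ≤ ∑ _k : Fin K, (2:ℝ) := Finset.sum_le_sum fun k _ =>
          aux_bound2 (h k).1 (by linarith [(h k).2])
      _ = 2 * K := by simp [mul_comm]
  have hA'bd : ∀ᵐ ω ∂P, |∑ k, (X ω k + Z ω k) * Real.log (X ω k + Z ω k)| ≤ 2 * K := by
    filter_upwards [hX'bd] with ω h
    calc |∑ k, (X ω k + Z ω k) * Real.log (X ω k + Z ω k)|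
        ≤ ∑ k, |(X ω k + Z ω k) * Real.log (X ω k + Z ω k)| := Finset.abs_sum_le_sum_abs _ _
      _ ≤ ∑ _k : Fin K, (2:ℝ) := Finset.sum_le_sum fun k _ =>
          aux_bound2 (h k).1 (by linarith [(h k).2])
      _ = 2 * K := by simp [mul_comm]
  have hAint : Integrable (fun ω => ∑ k, X ω k * Real.log (X ω k)) P :=
    intbd _ (2 * K) hAmeas hAbd
  have hA'int : Integrable (fun ω => ∑ k, (X ω k + Z ω k) * Real.log (X ω k + Z ω k)) P :=
    intbd _ (2 * K) hA'meas hA'bd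
  have hBint : Integrable (fun ω => ∑ k, Real.log (xbar k) * X ω k) P :=
    integrable_finset_sum _ fun k _ => (hXint k).const_mul _
  have hB'k : ∀ k, Integrable (fun ω => Real.log (xbar k) * (X ω k + Z ω k)) P :=
    fun k => ((hXint k).add (hZint k)).const_mul _
  have hB'int : Integrable (fun ω => ∑ k, Real.log (xbar k) * (X ω k + Z ω k)) P :=
    integrable_finset_sum _ fun k _ => hB'k k
  -- split LHS
  have hsplitX : ∫ ω, ∑ k, X ω k * Real.log (X ω k / xbar k) ∂P
      = ∫ ω, ∑ k, X ω k * Real.log (X ω k) ∂P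
        - ∑ k, Real.log (xbar k) * xbar k := by
    have hae : (fun ω => ∑ k, X ω k * Real.log (X ω k / xbar k)) =ᵐ[P]
        fun ω => (∑ k, X ω k * Real.log (X ω k)) - ∑ k, Real.log (xbar k) * X ω k := by
      filter_upwards [hXbd] with ω h
      rw [← Finset.sum_sub_distrib]
      apply Finset.sum_congr rfl
      intro k _
      rcases eq_or_lt_of_le (h k).1 with h0|h0
      · simp [← h0]
      · rw [Real.log_div h0.ne' (hxbarpos k).ne']; ring
    rw [integral_congr_ae hae, integral_sub hAint hBint,
      integral_finset_sum _ (fun k _ => (hXint k).const_mul _)]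
    congr 1
    apply Finset.sum_congr rfl
    intro k _
    rw [integral_const_mul, ← hxbar k]
  have hsplitX' : ∫ ω, ∑ k, (X ω k + Z ω k) * Real.log ((X ω k + Z ω k) / xbar k) ∂P
      = ∫ ω, ∑ k, (X ω k + Z ω k) * Real.log (X ω k + Z ω k) ∂P
        - ∑ k, Real.log (xbar k) * xbar k := by
    have hae : (fun ω => ∑ k, (X ω k + Z ω k) * Real.log ((X ω k + Z ω k) / xbar k)) =ᵐ[P]
        fun ω => (∑ k, (X ω k + Z ω k) * Real.log (X ω k + Z ω k))
          - ∑ k, Real.log (xbar k) * (X ω k + Z ω k) := by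
      filter_upwards [hX'bd] with ω h
      rw [← Finset.sum_sub_distrib]
      apply Finset.sum_congr rfl
      intro k _
      rcases eq_or_lt_of_le (h k).1 with h0|h0
      · simp [← h0]
      · rw [Real.log_div h0.ne' (hxbarpos k).ne']; ring
    rw [integral_congr_ae hae, integral_sub hA'int hB'int,
      integral_finset_sum _ (fun k _ => hB'k _)]
    congr 1
    apply Finset.sum_congr rfl
    intro k _
    rw [integral_const_mul, integral_add (hXint k) (hZint k), hEZ k, add_zero, ← hxbar k]
  rw [hsplitX, hsplitX']
  linarith [hentropy]
end
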